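/- arXiv:1802.09871 — 6 statements merged into one kernel-verified Lean document; each statement's English description precedes it below -/
import Mathlib

section
/- Let x ∈ {1,...,n} and let A be a k-subset of {1,...,n} with x ∉ A. Then the number of k-subsets B containing x that intersect A equals H := C(n−1,k−1) − C(n−k−1,k−1); moreover H ≤ k·C(n−2,k−2). -/
open Finset

lemma aux_card_mem (s : Finset ℕ) (x : ℕ) (hx : x ∈ s) (k : ℕ) (hk : 1 ≤ k) :
    ((s.powersetCard k).filter (fun B => x ∈ B)).card
      = Nat.choose (s.card - 1) (k - 1) := by
  rw [← Finset.card_erase_of_mem hx, ← Finset.card_powersetCard]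
  apply Finset.card_bij' (fun B _ => B.erase x) (fun C _ => insert x C)
  · intro B hB
    simp only [mem_filter] at hB
    exact Finset.insert_erase hB.2
  · intro C hC
    rw [mem_powersetCard] at hC
    have hxC : x ∉ C := fun h => (mem_erase.mp (hC.1 h)).1 rfl
    exact Finset.erase_insert hxC
  · intro B hB
    simp only [mem_filter, mem_powersetCard] at hB
    obtain ⟨⟨hsub, hcard⟩, hxB⟩ := hB
    rw [mem_powersetCard]
    constructor
    · intro y hy
      rw [mem_erase] at hy ⊢
      exact ⟨hy.1, hsub hy.2⟩
    · rw [Finset.card_erase_of_mem hxB, hcard]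
  · intro C hC
    rw [mem_powersetCard] at hC
    obtain ⟨hsub, hcard⟩ := hC
    have hxC : x ∉ C := fun h => (mem_erase.mp (hsub h)).1 rfl
    simp only [mem_filter, mem_powersetCard]
    refine ⟨⟨?_, ?_⟩, mem_insert_self _ _⟩
    · intro y hy
      rcases mem_insert.mp hy with rfl | hy
      · exact hx
      · exact (mem_erase.mp (hsub hy)).2
    · rw [Finset.card_insert_of_notMem hxC, hcard]
      omega

lemma aux_tele : ∀ (t a s : ℕ),
    Nat.choose a (s + 1) ≤ Nat.choose (a - t) (s + 1) + t * Nat.choose (a - 1) s := by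
  intro t
  induction t with
  | zero => intro a s; simp
  | succ t ih =>
    intro a s
    match a with
    | 0 => simp
    | m + 1 =>
      have h1 : Nat.choose (m + 1) (s + 1) = Nat.choose m s + Nat.choose m (s + 1) :=
        Nat.choose_succ_succ m s
      have h2 := ih m s
      have h3 : Nat.choose (m - 1) s ≤ Nat.choose m s :=
        Nat.choose_le_choose s (Nat.sub_le m 1)
      have : m + 1 - (t + 1) = m - t := by omega
      rw [this, h1]
      simp only [Nat.add_sub_cancel]
      calc Nat.choose m s + Nat.choose m (s + 1)
          ≤ Nat.choose m s + (Nat.choose (m - t) (s + 1) + t * Nat.choose (m - 1) s) :=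
            Nat.add_le_add_left h2 _
        _ ≤ Nat.choose m s + (Nat.choose (m - t) (s + 1) + t * Nat.choose m s) := by
            exact Nat.add_le_add_left (Nat.add_le_add_left (Nat.mul_le_mul_left t h3) _) _
        _ = Nat.choose (m - t) (s + 1) + (t + 1) * Nat.choose m s := by ring

/-- The number of `k`-subsets containing `x` that meet a fixed `k`-set `A` with
`x ∉ A` equals `H = C(n-1,k-1) - C(n-k-1,k-1)`, and `H ≤ k·C(n-2,k-2)`. -/
theorem card_star_meeting (n k : ℕ) (hk : 1 ≤ k) (hn : k + 1 ≤ n)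
    (x : ℕ) (hx : x ∈ Finset.range n)
    (A : Finset ℕ) (hA : A ⊆ Finset.range n) (hAcard : A.card = k) (hxA : x ∉ A) :
    (((Finset.range n).powersetCard k).filter
        (fun B => x ∈ B ∧ ¬ Disjoint A B)).card
      = Nat.choose (n - 1) (k - 1) - Nat.choose (n - k - 1) (k - 1) ∧
    Nat.choose (n - 1) (k - 1) - Nat.choose (n - k - 1) (k - 1)
      ≤ k * Nat.choose (n - 2) (k - 2) := by
  constructor
  · have h1 : (((Finset.range n).powersetCard k).filter (fun B => x ∈ B)).card
        = Nat.choose (n - 1) (k - 1) := by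
      rw [aux_card_mem _ x hx k hk, Finset.card_range]
    have hxd : x ∈ Finset.range n \ A := Finset.mem_sdiff.mpr ⟨hx, hxA⟩
    have hcardsd : (Finset.range n \ A).card = n - k := by
      rw [Finset.card_sdiff_of_subset hA, Finset.card_range, hAcard]
    have hset : (((Finset.range n).powersetCard k).filter (fun B => x ∈ B ∧ Disjoint A B))
        = (((Finset.range n \ A)).powersetCard k).filter (fun B => x ∈ B) := by
      ext B
      simp only [mem_filter, mem_powersetCard, Finset.subset_sdiff, disjoint_comm]
      tauto
    have h2 : (((Finset.range n).powersetCard k).filter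
        (fun B => x ∈ B ∧ Disjoint A B)).card = Nat.choose (n - k - 1) (k - 1) := by
      rw [hset, aux_card_mem _ x hxd k hk, hcardsd]
    have hsplit := Finset.card_filter_add_card_filter_not
      (s := ((Finset.range n).powersetCard k).filter (fun B => x ∈ B))
      (p := fun B => Disjoint A B)
    rw [Finset.filter_filter, Finset.filter_filter] at hsplit
    rw [h1, h2] at hsplit
    omega
  · rcases Nat.lt_or_ge k 2 with h2 | h2
    · interval_cases k
      simp
    · have hk1 : k - 1 = (k - 2) + 1 := by omega
      have := aux_tele k (n - 1) (k - 2)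
      rw [← hk1] at this
      have he : n - 1 - k = n - k - 1 := by omega
      have he2 : n - 1 - 1 = n - 2 := by omega
      rw [he, he2] at this
      omega
end

section
/- Let A be a finite family of k-subsets of {1,...,n} such that every member of A intersects at most s other members of A. Then the number of r-element subfamilies of A consisting of pairwise disjoint sets is at least (1/r!) · ∏_{i=0}^{r−1} max(|A| − i·(s+1), 0). -/
/-!
Call `E ⊆ 𝒜` compatible if its members are pairwise related by a symmetric relation `r`
(here: disjointness), and suppose each member of `𝒜` fails `r` with at most `s` others. A
compatible `m`-family `E` blocks at most `m (s + 1)` members of `𝒜` (its own members and the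
members they conflict with), so it extends to at least `|𝒜| - m (s + 1)` compatible
`(m + 1)`-families, while each `(m + 1)`-family contains only `m + 1` families of size `m`.
Double counting the inclusions gives `c_m (|𝒜| - m (s + 1)) ≤ (m + 1) c_{m+1}` for the number
`c_m` of compatible `m`-families, and induction on `m` gives the product bound.
-/

open scoped Nat

namespace Finset

variable {α : Type*} [DecidableEq α] (r : α → α → Prop) [DecidableRel r]

def pairwisePowersetCard (𝒜 : Finset α) (m : ℕ) : Finset (Finset α) :=
  (𝒜.powersetCard m).filter (fun E => ∀ a ∈ E, ∀ b ∈ E, a ≠ b → r a b)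

variable {r} {𝒜 E F : Finset α} {m s : ℕ}

theorem mem_pairwisePowersetCard :
    E ∈ pairwisePowersetCard r 𝒜 m ↔
      (E ⊆ 𝒜 ∧ #E = m) ∧ ∀ a ∈ E, ∀ b ∈ E, a ≠ b → r a b := by
  rw [pairwisePowersetCard, mem_filter, mem_powersetCard]

theorem insert_mem_pairwisePowersetCard [Std.Symm r]
    (hE : E ∈ pairwisePowersetCard r 𝒜 m) {a : α} (ha : a ∈ 𝒜) (haE : a ∉ E)
    (hrel : ∀ b ∈ E, r b a) : insert a E ∈ pairwisePowersetCard r 𝒜 (m + 1) := by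
  obtain ⟨⟨hE𝒜, hEcard⟩, hEpair⟩ := mem_pairwisePowersetCard.1 hE
  refine mem_pairwisePowersetCard.2 ⟨⟨insert_subset ha hE𝒜, ?_⟩, ?_⟩
  · rw [card_insert_of_notMem haE, hEcard]
  · intro b hb c hc hbc
    rcases mem_insert.1 hb with rfl | hbE <;> rcases mem_insert.1 hc with rfl | hcE
    · exact absurd rfl hbc
    · exact Std.Symm.symm _ _ (hrel c hcE)
    · exact hrel b hbE
    · exact hEpair b hbE c hcE hbc

theorem card_sub_card_mul_le_card_filter_compatible
    (hs : ∀ a ∈ 𝒜, #(𝒜.filter (fun b => b ≠ a ∧ ¬ r a b)) ≤ s) (hE : E ⊆ 𝒜) :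
    #𝒜 - #E * (s + 1) ≤ #(𝒜.filter (fun a => a ∉ E ∧ ∀ b ∈ E, r b a)) := by
  have hblocked : 𝒜.filter (fun a => ¬ (a ∉ E ∧ ∀ b ∈ E, r b a)) ⊆
      E.biUnion (fun b => insert b (𝒜.filter (fun a => a ≠ b ∧ ¬ r b a))) := by
    intro a ha
    obtain ⟨ha𝒜, hbad⟩ := mem_filter.1 ha
    rw [mem_biUnion]
    by_cases haE : a ∈ E
    · exact ⟨a, haE, mem_insert_self _ _⟩
    · obtain ⟨b, hb, hnr⟩ : ∃ b ∈ E, ¬ r b a := by simpa [haE] using hbad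
      have hab : a ≠ b := (ne_of_mem_of_not_mem hb haE).symm
      exact ⟨b, hb, mem_insert_of_mem (mem_filter.2 ⟨ha𝒜, hab, hnr⟩)⟩
  have hcard : #(𝒜.filter (fun a => ¬ (a ∉ E ∧ ∀ b ∈ E, r b a))) ≤ #E * (s + 1) :=
    calc _ ≤ _ := card_le_card hblocked
      _ ≤ ∑ b ∈ E, #(insert b (𝒜.filter (fun a => a ≠ b ∧ ¬ r b a))) :=
          card_biUnion_le
      _ ≤ ∑ _b ∈ E, (s + 1) :=
          sum_le_sum fun b hb => (card_insert_le _ _).trans (Nat.succ_le_succ (hs b (hE hb)))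
      _ = #E * (s + 1) := by rw [sum_const, smul_eq_mul]
  have := card_filter_add_card_filter_not (s := 𝒜) (fun a => a ∉ E ∧ ∀ b ∈ E, r b a)
  omega

theorem card_sub_le_card_bipartiteAbove_subset [Std.Symm r]
    (hs : ∀ a ∈ 𝒜, #(𝒜.filter (fun b => b ≠ a ∧ ¬ r a b)) ≤ s)
    (hE : E ∈ pairwisePowersetCard r 𝒜 m) :
    #𝒜 - m * (s + 1) ≤
      #((pairwisePowersetCard r 𝒜 (m + 1)).bipartiteAbove (· ⊆ ·) E) := by
  obtain ⟨⟨hE𝒜, hEcard⟩, -⟩ := mem_pairwisePowersetCard.1 hE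
  calc #𝒜 - m * (s + 1) ≤ #(𝒜.filter (fun a => a ∉ E ∧ ∀ b ∈ E, r b a)) :=
        hEcard ▸ card_sub_card_mul_le_card_filter_compatible hs hE𝒜
    _ ≤ _ := by
      refine card_le_card_of_injOn (insert · E) (fun a ha => ?_) (fun a ha b hb hab => ?_)
      · obtain ⟨ha𝒜, haE, hrel⟩ := mem_filter.1 ha
        exact (mem_bipartiteAbove _).2
          ⟨insert_mem_pairwisePowersetCard hE ha𝒜 haE hrel, subset_insert _ _⟩
      · have haE := (mem_filter.1 ha).2.1
        have hbE := (mem_filter.1 hb).2.1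
        simpa [haE, hbE] using congrArg (· \ E) hab

theorem card_bipartiteBelow_subset_le (hF : #F = m + 1) :
    #((pairwisePowersetCard r 𝒜 m).bipartiteBelow (· ⊆ ·) F) ≤ m + 1 :=
  calc _ ≤ #(F.powersetCard m) := card_le_card fun E hE => by
        obtain ⟨hE, hEF⟩ := (mem_bipartiteBelow _).1 hE
        exact mem_powersetCard.2 ⟨hEF, (mem_pairwisePowersetCard.1 hE).1.2⟩
    _ = m + 1 := by rw [card_powersetCard, hF, Nat.choose_succ_self_right]

theorem card_pairwisePowersetCard_mul_le [Std.Symm r]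
    (hs : ∀ a ∈ 𝒜, #(𝒜.filter (fun b => b ≠ a ∧ ¬ r a b)) ≤ s) (m : ℕ) :
    #(pairwisePowersetCard r 𝒜 m) * (#𝒜 - m * (s + 1)) ≤
      #(pairwisePowersetCard r 𝒜 (m + 1)) * (m + 1) :=
  card_mul_le_card_mul (· ⊆ ·) (fun _ hE => card_sub_le_card_bipartiteAbove_subset hs hE)
    (fun _ hF => card_bipartiteBelow_subset_le (mem_pairwisePowersetCard.1 hF).1.2)

theorem prod_le_factorial_mul_card_pairwisePowersetCard [Std.Symm r]
    (hs : ∀ a ∈ 𝒜, #(𝒜.filter (fun b => b ≠ a ∧ ¬ r a b)) ≤ s) (m : ℕ) :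
    ∏ i ∈ range m, (#𝒜 - i * (s + 1)) ≤ m ! * #(pairwisePowersetCard r 𝒜 m) := by
  induction m with
  | zero => simpa using card_pos.2 ⟨∅, mem_pairwisePowersetCard.2 (by simp)⟩
  | succ m ih =>
    calc ∏ i ∈ range (m + 1), (#𝒜 - i * (s + 1))
        ≤ m ! * (#(pairwisePowersetCard r 𝒜 m) * (#𝒜 - m * (s + 1))) := by
          rw [prod_range_succ, ← mul_assoc]; gcongr
      _ ≤ m ! * (#(pairwisePowersetCard r 𝒜 (m + 1)) * (m + 1)) :=
          Nat.mul_le_mul_left _ (card_pairwisePowersetCard_mul_le hs m)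
      _ = (m + 1)! * #(pairwisePowersetCard r 𝒜 (m + 1)) := by
          rw [Nat.factorial_succ]; ring

end Finset

theorem greedy_matching_count_general (r s : ℕ) (𝒜 : Finset (Finset ℕ))
    (hs : ∀ A ∈ 𝒜, (𝒜.filter (fun B => B ≠ A ∧ ¬ Disjoint A B)).card ≤ s) :
    ∏ i ∈ Finset.range r, (𝒜.card - i * (s + 1))
      ≤ Nat.factorial r *
        ((𝒜.powersetCard r).filter
          (fun E => ∀ A ∈ E, ∀ B ∈ E, A ≠ B → Disjoint A B)).card :=
  Finset.prod_le_factorial_mul_card_pairwisePowersetCard hs r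

/-- Greedy lower bound: if every member of `𝒜` intersects at most `s` other
members, then the number of `r`-element pairwise disjoint subfamilies of `𝒜`
is at least `(1/r!)·∏_{i=0}^{r-1} max(|𝒜| - i(s+1), 0)`. -/
theorem greedy_matching_count (n k r s : ℕ) (𝒜 : Finset (Finset ℕ))
    (h𝒜 : ∀ A ∈ 𝒜, A ⊆ Finset.range n ∧ A.card = k)
    (hs : ∀ A ∈ 𝒜, (𝒜.filter (fun B => B ≠ A ∧ ¬ Disjoint A B)).card ≤ s) :
    ∏ i ∈ Finset.range r, (𝒜.card - i * (s + 1))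
      ≤ Nat.factorial r *
        ((𝒜.powersetCard r).filter
          (fun E => ∀ A ∈ E, ∀ B ∈ E, A ≠ B → Disjoint A B)).card :=
  greedy_matching_count_general r s 𝒜 hs
end

section
/- In the lexicographical ordering of k-subsets of {1,...,n} (where A < B iff min(A Δ B) ∈ A), the first C(n,k) − C(n−l,k) sets are exactly those k-subsets that intersect {1,...,l}, for any 0 ≤ l ≤ n. -/
/-- `A` precedes `B` in the lexicographic ordering of finite sets of naturals:
the minimum of the symmetric difference belongs to `A`. -/
def LexLt (A B : Finset ℕ) : Prop :=
  ∃ m ∈ A, m ∉ B ∧ ∀ j < m, (j ∈ A ↔ j ∈ B)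

/-- The first `C(n,k) - C(n-l,k)` k-subsets of `{0,…,n-1}` in the lexicographic
order are exactly those meeting `{0,…,l-1}`. -/
theorem lex_initial_segment (n k l : ℕ) (hl : l ≤ n) :
    (((Finset.range n).powersetCard k).filter
        (fun A => (A ∩ Finset.range l).Nonempty)).card
      = Nat.choose n k - Nat.choose (n - l) k ∧
    ∀ A ∈ (Finset.range n).powersetCard k, ∀ B ∈ (Finset.range n).powersetCard k,
      (A ∩ Finset.range l).Nonempty → ¬ (B ∩ Finset.range l).Nonempty →
        LexLt A B := by
  constructor
  · have h1 : (((Finset.range n).powersetCard k).filter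
        (fun A => ¬ (A ∩ Finset.range l).Nonempty))
        = ((Finset.range n \ Finset.range l).powersetCard k) := by
      ext A
      simp only [Finset.mem_filter, Finset.mem_powersetCard,
        Finset.not_nonempty_iff_eq_empty, Finset.subset_sdiff,
        ← Finset.disjoint_iff_inter_eq_empty]
      tauto
    have h2 : (Finset.range n \ Finset.range l).card = n - l := by
      rw [Finset.card_sdiff_of_subset (Finset.range_subset_range.2 hl), Finset.card_range,
        Finset.card_range]
    have h3 := Finset.card_filter_add_card_filter_not
      (s := (Finset.range n).powersetCard k)
      (p := fun A => (A ∩ Finset.range l).Nonempty)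
    rw [h1, Finset.card_powersetCard, h2, Finset.card_powersetCard,
      Finset.card_range] at h3
    have hle : Nat.choose (n - l) k ≤ Nat.choose n k :=
      Nat.choose_le_choose k (Nat.sub_le n l)
    omega
  · intro A _ B _ hAl hBl
    obtain ⟨x, hx⟩ := hAl
    rw [Finset.mem_inter, Finset.mem_range] at hx
    have hAne : A.Nonempty := ⟨x, hx.1⟩
    have hmlt : A.min' hAne < l := lt_of_le_of_lt (Finset.min'_le _ _ hx.1) hx.2
    refine ⟨A.min' hAne, A.min'_mem _, ?_, ?_⟩
    · intro hmB
      exact hBl ⟨_, Finset.mem_inter.2 ⟨hmB, Finset.mem_range.2 hmlt⟩⟩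
    · intro j hj
      constructor
      · intro hjA; exact absurd (Finset.min'_le _ _ hjA) (not_le.2 hj)
      · intro hjB
        exact absurd ⟨j, Finset.mem_inter.2 ⟨hjB, Finset.mem_range.2 (hj.trans hmlt)⟩⟩ hBl
end

section
/- Let r ≥ 2, k ≥ 1, n ≥ rk, and let A be a family of k-subsets of {1,...,n} of size |A| = C(n,k) − C(n−r+1,k) + m for some m ≥ 1 such that A is the union of the stars S_1,...,S_{r−1} together with a subfamily T of size m of k-sets disjoint from {1,...,r−1}. Then the number of r-element pairwise disjoint subfamilies of A is at least m · ∏_{i=1}^{r−1} C(n − ik − (r−1−i) − 1, k−1). -/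
/-!
For each `B ∈ T` the edges through `B` are built greedily: for `c = 0, …, r - 2` in turn pick a
`k`-set meeting `{0, …, r - 2}` exactly in `c` and disjoint from everything chosen so far. Before
the `i`-th choice, `{0, …, r - 2}` and the chosen sets cover at most `(r - 1) + k + i (k - 1)`
points, and adjoining `c` to any `(k - 1)`-set off them is a valid choice; this gives the binomial
factors. Distinct choice sequences give distinct edges, since each member of an edge is recognised
by the family (`T` or the star of `c`) it was drawn from, and these families are disjoint.
-/

open Finset

section DisjointChoices

variable {α : Type*} [DecidableEq α]

def disjointChoices : List (Finset (Finset α)) → Finset α → Finset (Finset (Finset α))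
  | [], _ => {∅}
  | 𝒮 :: 𝒮s, U =>
      {A ∈ 𝒮 | Disjoint A U}.biUnion fun A => (disjointChoices 𝒮s (U ∪ A)).image (insert A)

theorem mem_disjointChoices_cons {𝒮 : Finset (Finset α)} {𝒮s : List (Finset (Finset α))}
    {U : Finset α} {F : Finset (Finset α)} :
    F ∈ disjointChoices (𝒮 :: 𝒮s) U ↔
      ∃ A ∈ 𝒮, Disjoint A U ∧ ∃ F' ∈ disjointChoices 𝒮s (U ∪ A), insert A F' = F := by
  simp [disjointChoices, and_assoc]

theorem forall_mem_of_mem_disjointChoices :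
    ∀ {𝒮s : List (Finset (Finset α))} {U : Finset α} {F : Finset (Finset α)},
      F ∈ disjointChoices 𝒮s U → ∀ A ∈ F, (∃ 𝒮 ∈ 𝒮s, A ∈ 𝒮) ∧ Disjoint A U
  | [], _, F, hF => by simp_all [disjointChoices]
  | 𝒮 :: 𝒮s, U, F, hF => by
    obtain ⟨A, hA𝒮, hAU, F', hF', rfl⟩ := mem_disjointChoices_cons.1 hF
    intro B hB
    obtain rfl | hBF' := mem_insert.1 hB
    · exact ⟨⟨𝒮, List.mem_cons_self, hA𝒮⟩, hAU⟩
    · obtain ⟨⟨𝒯, h𝒯, hB𝒯⟩, hBU⟩ := forall_mem_of_mem_disjointChoices hF' B hBF'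
      exact ⟨⟨𝒯, List.mem_cons_of_mem _ h𝒯, hB𝒯⟩, disjoint_union_right.1 hBU |>.1⟩

theorem pairwise_disjoint_of_mem_disjointChoices :
    ∀ {𝒮s : List (Finset (Finset α))} {U : Finset α} {F : Finset (Finset α)},
      F ∈ disjointChoices 𝒮s U → (F : Set (Finset α)).Pairwise Disjoint
  | [], _, F, hF => by simp_all [disjointChoices]
  | 𝒮 :: 𝒮s, U, F, hF => by
    obtain ⟨A, -, -, F', hF', rfl⟩ := mem_disjointChoices_cons.1 hF
    rw [coe_insert, Set.pairwise_insert_of_symm]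
    refine ⟨pairwise_disjoint_of_mem_disjointChoices hF', fun B hB _ => ?_⟩
    exact (disjoint_union_right.1 (forall_mem_of_mem_disjointChoices hF' B hB).2).2.symm

theorem notMem_of_mem_disjointChoices {𝒮 : Finset (Finset α)} {𝒮s : List (Finset (Finset α))}
    (h : ∀ 𝒯 ∈ 𝒮s, Disjoint 𝒮 𝒯) {U : Finset α} {F : Finset (Finset α)} {A : Finset α}
    (hA : A ∈ 𝒮) (hF : F ∈ disjointChoices 𝒮s U) : A ∉ F := fun hAF => by
  obtain ⟨⟨𝒯, h𝒯, hA𝒯⟩, -⟩ := forall_mem_of_mem_disjointChoices hF A hAF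
  exact disjoint_left.1 (h 𝒯 h𝒯) hA hA𝒯

theorem card_of_mem_disjointChoices :
    ∀ {𝒮s : List (Finset (Finset α))}, 𝒮s.Pairwise Disjoint →
      ∀ {U : Finset α} {F : Finset (Finset α)}, F ∈ disjointChoices 𝒮s U → #F = 𝒮s.length
  | [], _, _, F, hF => by simp_all [disjointChoices]
  | 𝒮 :: 𝒮s, h, U, F, hF => by
    obtain ⟨hhead, htail⟩ := List.pairwise_cons.1 h
    obtain ⟨A, hA, -, F', hF', rfl⟩ := mem_disjointChoices_cons.1 hF
    rw [card_insert_of_notMem (notMem_of_mem_disjointChoices hhead hA hF'),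
      card_of_mem_disjointChoices htail hF', List.length_cons]

theorem card_disjointChoices_cons {𝒮 : Finset (Finset α)} {𝒮s : List (Finset (Finset α))}
    (h : ∀ 𝒯 ∈ 𝒮s, Disjoint 𝒮 𝒯) (U : Finset α) :
    #(disjointChoices (𝒮 :: 𝒮s) U) =
      ∑ A ∈ 𝒮 with Disjoint A U, #(disjointChoices 𝒮s (U ∪ A)) := by
  rw [disjointChoices, card_biUnion]
  · refine sum_congr rfl fun A hA => card_image_of_injOn fun F hF F' hF' hFF' => ?_
    have hA𝒮 := (mem_filter.1 hA).1
    simpa [erase_insert (notMem_of_mem_disjointChoices h hA𝒮 hF),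
      erase_insert (notMem_of_mem_disjointChoices h hA𝒮 hF')] using congrArg (erase · A) hFF'
  · intro A hA A' hA' hAA'
    refine disjoint_left.2 fun F hF hF' => ?_
    obtain ⟨F₁, hF₁, rfl⟩ := mem_image.1 hF
    obtain ⟨F₂, hF₂, hF₂eq⟩ := mem_image.1 hF'
    have hA'F₁ : A' ∈ F₁ := by
      have := hF₂eq ▸ mem_insert_self A' F₂
      simpa [Ne.symm hAA'] using this
    exact notMem_of_mem_disjointChoices h (mem_filter.1 hA').1 hF₁ hA'F₁

theorem disjointChoices_subset {𝒮s : List (Finset (Finset α))} (h : 𝒮s.Pairwise Disjoint)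
    {𝒜 : Finset (Finset α)} (h𝒜 : ∀ 𝒮 ∈ 𝒮s, 𝒮 ⊆ 𝒜) (U : Finset α) :
    disjointChoices 𝒮s U ⊆
      {E ∈ 𝒜.powersetCard 𝒮s.length | ∀ A ∈ E, ∀ B ∈ E, A ≠ B → Disjoint A B} := by
  intro F hF
  refine mem_filter.2 ⟨mem_powersetCard.2 ⟨fun A hA => ?_, card_of_mem_disjointChoices h hF⟩,
    pairwise_disjoint_of_mem_disjointChoices hF⟩
  obtain ⟨⟨𝒮, h𝒮, hA𝒮⟩, -⟩ := forall_mem_of_mem_disjointChoices hF A hA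
  exact h𝒜 𝒮 h𝒮 hA𝒮

end DisjointChoices

section StarAt

variable {α : Type*} [DecidableEq α] (W : Finset α) (k : ℕ) (R : Finset α)

def starAt (c : α) : Finset (Finset α) := {A ∈ W.powersetCard k | A ∩ R = {c}}

variable {W k R}

theorem mem_starAt {c : α} {A : Finset α} :
    A ∈ starAt W k R c ↔ A ⊆ W ∧ #A = k ∧ A ∩ R = {c} := by
  simp [starAt, and_assoc]

theorem disjoint_starAt {c c' : α} (h : c ≠ c') : Disjoint (starAt W k R c) (starAt W k R c') :=
  disjoint_left.2 fun _ hA hA' => h <| singleton_injective <|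
    (mem_starAt.1 hA).2.2.symm.trans (mem_starAt.1 hA').2.2

theorem disjoint_starAt_of_forall_disjoint {T : Finset (Finset α)} (hT : ∀ B ∈ T, Disjoint B R)
    (c : α) : Disjoint T (starAt W k R c) :=
  disjoint_left.2 fun B hB hBc => by
    have hc : c ∈ B ∩ R := by rw [(mem_starAt.1 hBc).2.2]; exact mem_singleton_self c
    exact disjoint_left.1 (hT B hB) (mem_inter.1 hc).1 (mem_inter.1 hc).2

theorem card_union_union_le_of_mem_starAt {c : α} {A : Finset α} (hA : A ∈ starAt W k R c)
    (U : Finset α) : #(R ∪ (U ∪ A)) ≤ #(R ∪ U) + (k - 1) := by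
  obtain ⟨-, hAk, hAR⟩ := mem_starAt.1 hA
  have hsdiff : #(A \ R) + 1 = k := by
    rw [← hAk, ← card_sdiff_add_card_inter A R, hAR, card_singleton]
  calc #(R ∪ (U ∪ A)) = #((R ∪ U) ∪ (A \ R)) := by
        congr 1; ext x; simp only [mem_union, mem_sdiff]; tauto
    _ ≤ #(R ∪ U) + #(A \ R) := card_union_le _ _
    _ = #(R ∪ U) + (k - 1) := by omega

-- Adjoining `c` to a `(k - 1)`-subset of `W \ (R ∪ U)` gives a member of the star avoiding `U`.
theorem choose_le_card_starAt_disjoint (hk : 1 ≤ k) {c : α} (hcW : c ∈ W) (hcR : c ∈ R)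
    {U : Finset α} (hcU : c ∉ U) :
    (#W - #(R ∪ U)).choose (k - 1) ≤ #{A ∈ starAt W k R c | Disjoint A U} := by
  calc (#W - #(R ∪ U)).choose (k - 1)
      ≤ (#(W \ (R ∪ U))).choose (k - 1) := Nat.choose_le_choose _ (le_card_sdiff _ _)
    _ = #((W \ (R ∪ U)).powersetCard (k - 1)) := (card_powersetCard _ _).symm
    _ ≤ #{A ∈ starAt W k R c | Disjoint A U} := by
      refine card_le_card_of_injOn (insert c) (fun S hS => ?_) fun S hS S' hS' hSS' => ?_
      · obtain ⟨hSsub, hScard⟩ := mem_powersetCard.1 (mem_coe.1 hS)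
        have hSW : S ⊆ W := hSsub.trans sdiff_subset
        have hSR : Disjoint S R := disjoint_of_subset_left hSsub
          (disjoint_sdiff_self_left.mono_right subset_union_left)
        have hSU : Disjoint S U := disjoint_of_subset_left hSsub
          (disjoint_sdiff_self_left.mono_right subset_union_right)
        have hcS : c ∉ S := fun h => disjoint_left.1 hSR h hcR
        refine mem_coe.2 (mem_filter.2 ⟨mem_starAt.2 ⟨insert_subset hcW hSW, ?_, ?_⟩, ?_⟩)
        · rw [card_insert_of_notMem hcS, hScard]; omega
        · rw [insert_inter_of_mem hcR, disjoint_iff_inter_eq_empty.1 hSR, insert_empty]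
        · exact disjoint_insert_left.2 ⟨hcU, hSU⟩
      · have hcS : ∀ {S}, S ∈ ((W \ (R ∪ U)).powersetCard (k - 1) : Set (Finset α)) → c ∉ S :=
          fun hS h => (mem_sdiff.1 ((mem_powersetCard.1 (mem_coe.1 hS)).1 h)).2
            (mem_union_left _ hcR)
        simpa [erase_insert (hcS hS), erase_insert (hcS hS')] using congrArg (erase · c) hSS'

theorem prod_choose_le_card_disjointChoices_starAt (hk : 1 ≤ k) :
    ∀ {cs : List α}, cs.Nodup → ∀ {U : Finset α}, (∀ c ∈ cs, c ∈ W ∧ c ∈ R ∧ c ∉ U) →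
      ∀ {d : ℕ}, #(R ∪ U) ≤ d →
        ∏ i ∈ range cs.length, (#W - (d + i * (k - 1))).choose (k - 1) ≤
          #(disjointChoices (cs.map (starAt W k R)) U)
  | [], _, _, _, _, _ => by simp [disjointChoices]
  | c :: cs, hnodup, U, hcs, d, hd => by
    obtain ⟨hc, hnodup⟩ := List.nodup_cons.1 hnodup
    obtain ⟨hcW, hcR, hcU⟩ := hcs c List.mem_cons_self
    have hdisj : ∀ 𝒯 ∈ cs.map (starAt W k R), Disjoint (starAt W k R c) 𝒯 := by
      simp only [List.mem_map]
      rintro _ ⟨c', hc', rfl⟩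
      exact disjoint_starAt fun h => hc (h ▸ hc')
    have hfiber : ∀ A ∈ {A ∈ starAt W k R c | Disjoint A U},
        ∏ i ∈ range cs.length, (#W - (d + (k - 1) + i * (k - 1))).choose (k - 1) ≤
          #(disjointChoices (cs.map (starAt W k R)) (U ∪ A)) := by
      intro A hA
      have hAc := (mem_filter.1 hA).1
      refine prod_choose_le_card_disjointChoices_starAt hk hnodup (fun c' hc' => ?_)
        ((card_union_union_le_of_mem_starAt hAc U).trans (by omega))
      obtain ⟨hc'W, hc'R, hc'U⟩ := hcs c' (List.mem_cons_of_mem _ hc')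
      refine ⟨hc'W, hc'R, notMem_union.2 ⟨hc'U, fun hc'A => hc ?_⟩⟩
      have : c' ∈ A ∩ R := mem_inter.2 ⟨hc'A, hc'R⟩
      rw [(mem_starAt.1 hAc).2.2, mem_singleton] at this
      exact this ▸ hc'
    calc ∏ i ∈ range (c :: cs).length, (#W - (d + i * (k - 1))).choose (k - 1)
        = (#W - d).choose (k - 1) *
            ∏ i ∈ range cs.length, (#W - (d + (k - 1) + i * (k - 1))).choose (k - 1) := by
          rw [List.length_cons, prod_range_succ', mul_comm]
          congr 1
          · simp
          · refine prod_congr rfl fun i _ => ?_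
            rw [add_one_mul, add_assoc, add_comm (i * _)]
      _ ≤ #{A ∈ starAt W k R c | Disjoint A U} *
            ∏ i ∈ range cs.length, (#W - (d + (k - 1) + i * (k - 1))).choose (k - 1) := by
          gcongr
          exact (Nat.choose_le_choose _ (by omega)).trans
            (choose_le_card_starAt_disjoint hk hcW hcR hcU)
      _ ≤ ∑ A ∈ starAt W k R c with Disjoint A U,
            #(disjointChoices (cs.map (starAt W k R)) (U ∪ A)) := by
          simpa using card_nsmul_le_sum _ _ _ hfiber
      _ = #(disjointChoices ((c :: cs).map (starAt W k R)) U) := by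
          rw [List.map_cons, card_disjointChoices_cons hdisj]

end StarAt

theorem prod_Icc_choose_eq_prod_range (n k r : ℕ) (hk : 1 ≤ k) :
    ∏ i ∈ Icc 1 (r - 1), (n - i * k - (r - 1 - i) - 1).choose (k - 1) =
      ∏ i ∈ range (r - 1), (n - (r - 1 + k + i * (k - 1))).choose (k - 1) := by
  rw [← Ico_add_one_right_eq_Icc, prod_Ico_eq_prod_range, Nat.add_sub_cancel]
  refine prod_congr rfl fun i hi => ?_
  have hi := mem_range.1 hi
  have hik : i * (k - 1) + i = i * k := by
    rw [Nat.mul_sub_one, Nat.sub_add_cancel (Nat.le_mul_of_pos_right i hk)]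
  rw [add_comm 1 i, add_one_mul]
  congr 1
  omega

theorem prod_choose_le_card_disjointChoices_range_starAt {n k r : ℕ} (hk : 1 ≤ k)
    (hrn : r - 1 ≤ n) {B : Finset ℕ} (hBk : #B = k) (hBR : Disjoint B (range (r - 1))) :
    ∏ i ∈ range (r - 1), (n - (r - 1 + k + i * (k - 1))).choose (k - 1) ≤
      #(disjointChoices ((List.range (r - 1)).map (starAt (range n) k (range (r - 1)))) B) := by
  have hcs : ∀ c ∈ List.range (r - 1), c ∈ range n ∧ c ∈ range (r - 1) ∧ c ∉ B := fun c hc => by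
    have hcR : c ∈ range (r - 1) := mem_range.2 (List.mem_range.1 hc)
    exact ⟨mem_range.2 (by have := List.mem_range.1 hc; omega), hcR,
      fun hcB => disjoint_left.1 hBR hcB hcR⟩
  have hd : #(range (r - 1) ∪ B) ≤ r - 1 + k := by
    simpa [hBk] using card_union_le (range (r - 1)) B
  simpa only [card_range, List.length_map, List.length_range] using
    prod_choose_le_card_disjointChoices_starAt hk List.nodup_range hcs hd

theorem edges_in_stars_plus_T_general (n k r m : ℕ) (hr : 2 ≤ r) (hk : 1 ≤ k)
    (hn : r * k ≤ n)
    (T : Finset (Finset ℕ))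
    (hT : ∀ B ∈ T, B ⊆ Finset.range n ∧ B.card = k ∧ Disjoint B (Finset.range (r - 1)))
    (hTm : T.card = m)
    (𝒜 : Finset (Finset ℕ))
    (h𝒜 : 𝒜 = ((Finset.range n).powersetCard k).filter
        (fun A => (A ∩ Finset.range (r - 1)).Nonempty) ∪ T) :
    m * ∏ i ∈ Finset.Icc 1 (r - 1), Nat.choose (n - i * k - (r - 1 - i) - 1) (k - 1)
      ≤ ((𝒜.powersetCard r).filter
          (fun E => ∀ A ∈ E, ∀ B ∈ E, A ≠ B → Disjoint A B)).card := by
  set R := range (r - 1)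
  set stars := (List.range (r - 1)).map (starAt (range n) k R)
  have hrn : r - 1 ≤ n := by have := Nat.le_mul_of_pos_right r hk; omega
  have hTstars : ∀ 𝒮 ∈ stars, Disjoint T 𝒮 := List.forall_mem_map.2 fun c _ =>
    disjoint_starAt_of_forall_disjoint (fun B hB => (hT B hB).2.2) c
  have hpairwise : (T :: stars).Pairwise Disjoint :=
    List.pairwise_cons.2
      ⟨hTstars, List.Pairwise.map _ (fun _ _ => disjoint_starAt) List.nodup_range⟩
  have hsub𝒜 : ∀ 𝒮 ∈ T :: stars, 𝒮 ⊆ 𝒜 := by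
    simp only [List.forall_mem_cons, stars, List.forall_mem_map, h𝒜]
    refine ⟨subset_union_right, fun c _ A hA => mem_union_left _ ?_⟩
    obtain ⟨hAn, hAk, hAR⟩ := mem_starAt.1 hA
    exact mem_filter.2 ⟨mem_powersetCard.2 ⟨hAn, hAk⟩, hAR ▸ singleton_nonempty c⟩
  have hlength : (T :: stars).length = r := by
    simp only [stars, List.length_cons, List.length_map, List.length_range]
    omega
  calc m * ∏ i ∈ Icc 1 (r - 1), (n - i * k - (r - 1 - i) - 1).choose (k - 1)
      = ∑ _B ∈ T, ∏ i ∈ range (r - 1), (n - (r - 1 + k + i * (k - 1))).choose (k - 1) := by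
        rw [prod_Icc_choose_eq_prod_range n k r hk, sum_const, hTm, smul_eq_mul]
    _ ≤ ∑ B ∈ T with Disjoint B ∅, #(disjointChoices stars (∅ ∪ B)) := by
        simp only [disjoint_empty_right, filter_true, empty_union]
        exact sum_le_sum fun B hB => prod_choose_le_card_disjointChoices_range_starAt hk hrn
          (hT B hB).2.1 (hT B hB).2.2
    _ = #(disjointChoices (T :: stars) ∅) := (card_disjointChoices_cons hTstars ∅).symm
    _ ≤ _ := card_le_card (hlength ▸ disjointChoices_subset hpairwise hsub𝒜 ∅)

/-- Lower bound for the number of edges of `KG^r_{n,k}` inside the union of the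
stars `S_1, …, S_{r-1}` together with `m` extra sets avoiding `{1,…,r-1}`. -/
theorem edges_in_stars_plus_T (n k r m : ℕ) (hr : 2 ≤ r) (hk : 1 ≤ k)
    (hn : r * k ≤ n) (hm : 1 ≤ m)
    (T : Finset (Finset ℕ))
    (hT : ∀ B ∈ T, B ⊆ Finset.range n ∧ B.card = k ∧ Disjoint B (Finset.range (r - 1)))
    (hTm : T.card = m)
    (𝒜 : Finset (Finset ℕ))
    (h𝒜 : 𝒜 = ((Finset.range n).powersetCard k).filter
        (fun A => (A ∩ Finset.range (r - 1)).Nonempty) ∪ T)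
    (h𝒜card : 𝒜.card = Nat.choose n k - Nat.choose (n - r + 1) k + m) :
    m * ∏ i ∈ Finset.Icc 1 (r - 1), Nat.choose (n - i * k - (r - 1 - i) - 1) (k - 1)
      ≤ ((𝒜.powersetCard r).filter
          (fun E => ∀ A ∈ E, ∀ B ∈ E, A ≠ B → Disjoint A B)).card :=
  edges_in_stars_plus_T_general n k r m hr hk hn T hT hTm 𝒜 h𝒜
end

section
/- Let n ≥ 2k ≥ 4. If A is a family of k-subsets of {1,...,n} with |A| > C(n,k) − C(n−1,k) = C(n−1,k−1), then A contains two disjoint members. -/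
/-- Erdős–Ko–Rado (complement form, r = 2): a family of `k`-subsets of an
`n`-set (`n ≥ 2k ≥ 4`) with more than `C(n-1,k-1)` members contains two
disjoint members. -/
theorem ekr_complement (n k : ℕ) (hk : 2 ≤ k) (hn : 2 * k ≤ n)
    (𝒜 : Finset (Finset ℕ))
    (h𝒜 : ∀ A ∈ 𝒜, A ⊆ Finset.range n ∧ A.card = k)
    (hcard : Nat.choose (n - 1) (k - 1) < 𝒜.card) :
    ∃ A ∈ 𝒜, ∃ B ∈ 𝒜, A ≠ B ∧ Disjoint A B := by
  by_contra hcon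
  push_neg at hcon
  -- transfer to Fin n
  set f : ∀ A : {A // A ∈ 𝒜}, Finset (Fin n) :=
    fun A => A.1.attachFin (fun m hm => Finset.mem_range.1 ((h𝒜 A.1 A.2).1 hm)) with hf
  have himg : ∀ A, Finset.image Fin.val (f A) = A.1 := by
    intro A
    ext x
    simp only [Finset.mem_image, hf, Finset.mem_attachFin]
    constructor
    · rintro ⟨a, ha, rfl⟩; exact ha
    · intro hx
      exact ⟨⟨x, Finset.mem_range.1 ((h𝒜 A.1 A.2).1 hx)⟩, hx, rfl⟩
  set 𝒜' : Finset (Finset (Fin n)) := 𝒜.attach.image f with h𝒜'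
  have hinj : Function.Injective f := by
    intro A B hAB
    have := congrArg (Finset.image Fin.val) hAB
    rw [himg, himg] at this
    exact Subtype.ext this
  have hcard' : 𝒜'.card = 𝒜.card := by
    rw [h𝒜', Finset.card_image_of_injective _ hinj, Finset.card_attach]
  have hsized : (𝒜' : Set (Finset (Fin n))).Sized k := by
    intro A hA
    simp only [h𝒜', Finset.coe_image, Set.mem_image] at hA
    obtain ⟨B, _, rfl⟩ := hA
    rw [Finset.card_attachFin]
    exact (h𝒜 B.1 B.2).2
  have hint : (𝒜' : Set (Finset (Fin n))).Intersecting := by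
    intro A hA B hB hd
    simp only [h𝒜', Finset.coe_image, Set.mem_image] at hA hB
    obtain ⟨A₀, -, rfl⟩ := hA
    obtain ⟨B₀, -, rfl⟩ := hB
    have hd' : Disjoint A₀.1 B₀.1 := by
      rw [← himg A₀, ← himg B₀]
      exact (Finset.disjoint_image (f := Fin.val) Fin.val_injective).2 hd
    by_cases hne : A₀.1 = B₀.1
    · -- A₀ disjoint from itself: empty, but card = k ≥ 2
      rw [hne, Finset.disjoint_self_iff_empty] at hd'
      have := (h𝒜 B₀.1 B₀.2).2
      rw [hd'] at this
      simp at this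
      omega
    · exact hcon A₀.1 A₀.2 B₀.1 B₀.2 hne hd'
  have := Finset.erdos_ko_rado hint hsized (by omega)
  omega
end

section
/- Let r ≥ 2 and n ≥ (r−1)k + k + (r−1). Let Q be an (r−1)-subset of {1,...,n} and A a k-subset disjoint from Q. Then the number of edges of KG^r_{n,k} contained in S_Q ∪ {A} (where S_Q is the union of the stars of elements of Q) is at most ∏_{i=1}^{r−1} C(n−i, k−1). -/
/-!
Distinct members of a pairwise disjoint family have disjoint traces on `Q`, so at most `|Q|`
of them meet `Q`. Hence every edge inside `S_Q ∪ {A}` contains `A`, and its other `r - 1` members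
meet `Q` in pairwise distinct single points covering `Q`. An edge is therefore determined by a
choice, for each `x ∈ Q`, of a `k`-set meeting `Q` exactly in `x`; such a set is `x` together
with a `(k - 1)`-subset of the `n - (r - 1)` points outside `Q`, and
`C(n - (r - 1), k - 1) ≤ C(n - i, k - 1)` for `i ≤ r - 1`.
-/

open Finset

namespace Finset

variable {α : Type*} [DecidableEq α]

section PairwiseDisjoint

variable {E : Finset (Finset α)} {Q : Finset α}

theorem pairwiseDisjoint_inter_right (hE : (E : Set (Finset α)).Pairwise Disjoint)
    (Q : Finset α) : (E : Set (Finset α)).PairwiseDisjoint (· ∩ Q) :=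
  fun _ hB _ hC hBC => (hE hB hC hBC).mono inter_subset_left inter_subset_left

theorem sum_card_inter_le_of_pairwise_disjoint (hE : (E : Set (Finset α)).Pairwise Disjoint)
    (Q : Finset α) : ∑ B ∈ E, #(B ∩ Q) ≤ #Q := by
  rw [← card_biUnion (pairwiseDisjoint_inter_right hE Q)]
  exact card_le_card (biUnion_subset.2 fun _ _ => inter_subset_right)

theorem card_le_card_of_pairwise_disjoint (hE : (E : Set (Finset α)).Pairwise Disjoint)
    (hmeet : ∀ B ∈ E, (B ∩ Q).Nonempty) : #E ≤ #Q :=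
  calc #E = ∑ _B ∈ E, 1 := card_eq_sum_ones E
    _ ≤ ∑ B ∈ E, #(B ∩ Q) := sum_le_sum fun B hB => (hmeet B hB).card_pos
    _ ≤ #Q := sum_card_inter_le_of_pairwise_disjoint hE Q

theorem exists_inter_eq_singleton_of_pairwise_disjoint
    (hE : (E : Set (Finset α)).Pairwise Disjoint) (hmeet : ∀ B ∈ E, (B ∩ Q).Nonempty)
    (hcard : #Q ≤ #E) {x : α} (hx : x ∈ Q) : ∃ B ∈ E, B ∩ Q = {x} := by
  have hpos : ∀ B ∈ E, 1 ≤ #(B ∩ Q) := fun B hB => (hmeet B hB).card_pos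
  have hsum : ∑ _B ∈ E, 1 = ∑ B ∈ E, #(B ∩ Q) :=
    le_antisymm (sum_le_sum hpos) <| (sum_card_inter_le_of_pairwise_disjoint hE Q).trans <|
      hcard.trans (card_eq_sum_ones E).le
  have hone : ∀ B ∈ E, 1 = #(B ∩ Q) := (sum_eq_sum_iff_of_le hpos).1 hsum
  have hcover : E.biUnion (· ∩ Q) = Q := by
    refine eq_of_subset_of_card_le (biUnion_subset.2 fun _ _ => inter_subset_right) ?_
    rw [card_biUnion (pairwiseDisjoint_inter_right hE Q), ← hsum, ← card_eq_sum_ones]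
    exact hcard
  obtain ⟨B, hB, hxB⟩ := mem_biUnion.1 (hcover.symm ▸ hx)
  exact ⟨B, hB, eq_singleton_iff_unique_mem.2 ⟨hxB, fun y hy =>
    card_le_one.1 (hone B hB).ge y hy x hxB⟩⟩

end PairwiseDisjoint

theorem card_filter_inter_eq_singleton_le {V Q : Finset α} (hQV : Q ⊆ V) (k : ℕ) (x : α) :
    #{B ∈ V.powersetCard k | B ∩ Q = {x}} ≤ (#V - #Q).choose (k - 1) := by
  have hxB : ∀ {B : Finset α}, B ∩ Q = {x} → x ∈ B := fun hB =>
    mem_of_mem_inter_left (hB ▸ mem_singleton_self x)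
  rw [← card_sdiff_of_subset hQV, ← card_powersetCard]
  refine card_le_card_of_injOn (fun B => B.erase x) (fun B hB => ?_)
    fun B hB C hC => erase_injOn' x (hxB (mem_filter.1 hB).2) (hxB (mem_filter.1 hC).2)
  obtain ⟨hBV, hBk⟩ := mem_powersetCard.1 (mem_filter.1 hB).1
  have hBQ : B ∩ Q = {x} := (mem_filter.1 hB).2
  refine mem_powersetCard.2
    ⟨fun y hy => mem_sdiff.2 ⟨hBV (mem_of_mem_erase hy), fun hyQ => ?_⟩,
      by rw [card_erase_of_mem (hxB hBQ), hBk]⟩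
  have hyx : y ∈ B ∩ Q := mem_inter.2 ⟨mem_of_mem_erase hy, hyQ⟩
  rw [hBQ, mem_singleton] at hyx
  exact ne_of_mem_erase hy hyx

section Edges

variable {V Q A : Finset α} {k : ℕ}

theorem exists_mem_pi_eq_insert_image {E : Finset (Finset α)}
    (hEsub : E ⊆ insert A {B ∈ V.powersetCard k | (B ∩ Q).Nonempty})
    (hEcard : #E = #Q + 1) (hE : (E : Set (Finset α)).Pairwise Disjoint) :
    ∃ f ∈ Q.pi fun x => {B ∈ V.powersetCard k | B ∩ Q = {x}},
      insert A (Q.attach.image fun x => f x.1 x.2) = E := by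
  have hmem : ∀ B ∈ E, B ≠ A → B ∈ V.powersetCard k ∧ (B ∩ Q).Nonempty :=
    fun B hB hBA => mem_filter.1 ((mem_insert.1 (hEsub hB)).resolve_left hBA)
  have hAE : A ∈ E := by
    by_contra hAE
    have := card_le_card_of_pairwise_disjoint hE fun B hB =>
      (hmem B hB (ne_of_mem_of_not_mem hB hAE)).2
    omega
  have hmem' : ∀ B ∈ E.erase A, B ∈ E ∧ B ∈ V.powersetCard k ∧ (B ∩ Q).Nonempty :=
    fun B hB => ⟨mem_of_mem_erase hB, hmem B (mem_of_mem_erase hB) (ne_of_mem_erase hB)⟩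
  have htransversal : ∀ x ∈ Q, ∃ B ∈ E.erase A, B ∩ Q = {x} := fun x hx =>
    exists_inter_eq_singleton_of_pairwise_disjoint (hE.mono (coe_subset.2 (erase_subset A E)))
      (fun B hB => (hmem' B hB).2.2) (by rw [card_erase_of_mem hAE, hEcard]; rfl) hx
  choose f hfE hfQ using htransversal
  refine ⟨f, mem_pi.2 fun x hx => mem_filter.2 ⟨(hmem' _ (hfE x hx)).2.1, hfQ x hx⟩, ?_⟩
  ext B
  simp only [mem_insert, mem_image, mem_attach, true_and, Subtype.exists]
  constructor
  · rintro (rfl | ⟨x, hx, rfl⟩)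
    exacts [hAE, (hmem' _ (hfE x hx)).1]
  · refine fun hB => or_iff_not_imp_left.2 fun hBA => ?_
    obtain ⟨x, hx⟩ := (hmem B hB hBA).2
    obtain ⟨hxB, hxQ⟩ := mem_inter.1 hx
    refine ⟨x, hxQ, of_not_not fun hne => ?_⟩
    have hxf : x ∈ f x hxQ :=
      mem_of_mem_inter_left ((hfQ x hxQ).symm ▸ mem_singleton_self x)
    exact disjoint_left.1 (hE (hmem' _ (hfE x hxQ)).1 hB hne) hxf hxB

theorem card_pairwise_disjoint_powersetCard_insert_le (hQV : Q ⊆ V) :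
    #{E ∈ (insert A {B ∈ V.powersetCard k | (B ∩ Q).Nonempty}).powersetCard (#Q + 1) |
        ∀ B ∈ E, ∀ C ∈ E, B ≠ C → Disjoint B C}
      ≤ (#V - #Q).choose (k - 1) ^ #Q := by
  calc _ ≤ #(Q.pi fun x => {B ∈ V.powersetCard k | B ∩ Q = {x}}) := by
        refine card_le_card_of_surjOn (fun f => insert A (Q.attach.image fun x => f x.1 x.2))
          fun E hE => ?_
        obtain ⟨hE, hdisj⟩ := mem_filter.1 hE
        obtain ⟨hEsub, hEcard⟩ := mem_powersetCard.1 hE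
        exact exists_mem_pi_eq_insert_image hEsub hEcard fun B hB C hC => hdisj B hB C hC
    _ = ∏ x ∈ Q, #{B ∈ V.powersetCard k | B ∩ Q = {x}} := card_pi _ _
    _ ≤ ∏ _x ∈ Q, (#V - #Q).choose (k - 1) :=
        prod_le_prod' fun x _ => card_filter_inter_eq_singleton_le hQV k x
    _ = (#V - #Q).choose (k - 1) ^ #Q := prod_const _

end Edges

end Finset

theorem edges_in_SQ_union_A_upper_general (n k r : ℕ) (hr : 2 ≤ r)
    (Q : Finset ℕ) (hQ : Q ⊆ Finset.range n) (hQcard : Q.card = r - 1)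
    (A : Finset ℕ) :
    (((insert A (((Finset.range n).powersetCard k).filter
          (fun B => (B ∩ Q).Nonempty))).powersetCard r).filter
        (fun E => ∀ B ∈ E, ∀ C ∈ E, B ≠ C → Disjoint B C)).card
      ≤ ∏ i ∈ Finset.Icc 1 (r - 1), Nat.choose (n - i) (k - 1) := by
  obtain rfl : r = #Q + 1 := by omega
  calc _ ≤ (n - #Q).choose (k - 1) ^ #Q := by
        simpa only [card_range] using
          card_pairwise_disjoint_powersetCard_insert_le (A := A) (k := k) hQ
    _ = ∏ _i ∈ Icc 1 #Q, (n - #Q).choose (k - 1) := by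
        rw [prod_const, Nat.card_Icc, Nat.add_sub_cancel]
    _ ≤ ∏ i ∈ Icc 1 (#Q + 1 - 1), (n - i).choose (k - 1) := by
        rw [Nat.add_sub_cancel]
        exact prod_le_prod' fun i hi =>
          Nat.choose_le_choose _ (Nat.sub_le_sub_left (mem_Icc.1 hi).2 n)

/-- Upper bound on the number of edges of `KG^r_{n,k}` inside `S_Q ∪ {A}` where
`|Q| = r-1` and `A` is a `k`-set disjoint from `Q`. -/
theorem edges_in_SQ_union_A_upper (n k r : ℕ) (hr : 2 ≤ r) (hk : 1 ≤ k)
    (hn : (r - 1) * k + k + (r - 1) ≤ n)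
    (Q : Finset ℕ) (hQ : Q ⊆ Finset.range n) (hQcard : Q.card = r - 1)
    (A : Finset ℕ) (hA : A ⊆ Finset.range n) (hAcard : A.card = k)
    (hAQ : Disjoint A Q) :
    (((insert A (((Finset.range n).powersetCard k).filter
          (fun B => (B ∩ Q).Nonempty))).powersetCard r).filter
        (fun E => ∀ B ∈ E, ∀ C ∈ E, B ≠ C → Disjoint B C)).card
      ≤ ∏ i ∈ Finset.Icc 1 (r - 1), Nat.choose (n - i) (k - 1) :=
  edges_in_SQ_union_A_upper_general n k r hr Q hQ hQcard A
end
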